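/- arXiv:math/0501340 — 4 statements merged into one kernel-verified Lean document; each statement's English description precedes it below -/
import Mathlib

section
/- There exist a poset P of length 3 and three elements A, B, C of Co(P) such that the sublattice of Co(P) generated by {A, B, C} is infinite. Consequently, for every n ≥ 3 the class SUB_n of lattices embeddable into Co(Q) for some poset Q of length at most n is not locally finite. -/
/-! Common definitions: lattices of order-convex subsets of a poset,
length of a poset, the identities (S), (U), (B), (L2), (H_n), (H_{m,n}),
join-irreducibility, the join-dependency relation, join-seeds,
the posets P_{I,J}, tree-like posets, D-closed sets,
and complete lattice congruences. -/

open Set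

/-- The lattice `Co P` of all order-convex subsets of a poset `P`. -/
def Co (P : Type*) [PartialOrder P] : Type _ := {s : Set P // s.OrdConnected}

namespace Co

variable {P : Type*} [PartialOrder P]

instance : PartialOrder (Co P) := Subtype.partialOrder _

instance : InfSet (Co P) :=
  ⟨fun S => ⟨⋂ s ∈ S, s.1, Set.ordConnected_biInter fun s _ => s.2⟩⟩

noncomputable instance : CompleteLattice (Co P) :=
  completeLatticeOfInf (Co P) (by
    intro S
    constructor
    · intro t ht
      exact Set.biInter_subset_of_mem (t := fun s => s.1) ht
    · intro b hb
      exact Set.subset_iInter₂ fun t ht => hb ht)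

/-- The order-convex subset of `P` with underlying set `X`. -/
def mk' (X : Set P) (hX : X.OrdConnected) : Co P := ⟨X, hX⟩

/-- The singleton `{p}`, as an order-convex set. -/
def sngl (p : P) : Co P := ⟨{p}, Set.ordConnected_singleton⟩

/-- The empty order-convex set. -/
def emp : Co P := ⟨∅, Set.ordConnected_empty⟩

end Co

/-- `lengthLE P n` states that the poset `P` has length at most `n`, that is,
every finite chain of `P` has at most `n + 1` elements. -/
def lengthLE (P : Type*) [PartialOrder P] (n : ℕ) : Prop :=
  ∀ C : Finset P, IsChain (· ≤ ·) (C : Set P) → C.card ≤ n + 1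

section Identities

/-- The Stirlitz identity (S). -/
def IdS (L : Type*) [Lattice L] : Prop :=
  ∀ a b b₀ b₁ c : L,
    a ⊓ ((b ⊓ (b₀ ⊔ b₁)) ⊔ c) =
      (a ⊓ (b ⊓ (b₀ ⊔ b₁)))
      ⊔ (a ⊓ (b₀ ⊔ c) ⊓ ((b ⊓ (b₀ ⊔ b₁) ⊓ (a ⊔ b₀)) ⊔ c))
      ⊔ (a ⊓ (b₁ ⊔ c) ⊓ ((b ⊓ (b₀ ⊔ b₁) ⊓ (a ⊔ b₁)) ⊔ c))

/-- The Udav identity (U). -/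
def IdU (L : Type*) [Lattice L] : Prop :=
  ∀ x x₀ x₁ x₂ : L,
    x ⊓ (x₀ ⊔ x₁) ⊓ (x₁ ⊔ x₂) ⊓ (x₀ ⊔ x₂) =
      (x ⊓ x₀ ⊓ (x₁ ⊔ x₂)) ⊔ (x ⊓ x₁ ⊓ (x₀ ⊔ x₂)) ⊔ (x ⊓ x₂ ⊓ (x₀ ⊔ x₁))

/-- The Bond identity (B). -/
def IdB (L : Type*) [Lattice L] : Prop :=
  ∀ x a₀ a₁ b₀ b₁ : L,
    x ⊓ (a₀ ⊔ a₁) ⊓ (b₀ ⊔ b₁) =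
      (x ⊓ a₀ ⊓ (b₀ ⊔ b₁)) ⊔ (x ⊓ a₁ ⊓ (b₀ ⊔ b₁))
      ⊔ (x ⊓ b₀ ⊓ (a₀ ⊔ a₁)) ⊔ (x ⊓ b₁ ⊓ (a₀ ⊔ a₁))
      ⊔ (x ⊓ (a₀ ⊔ a₁) ⊓ (b₀ ⊔ b₁) ⊓ (a₀ ⊔ b₀) ⊓ (a₁ ⊔ b₁))
      ⊔ (x ⊓ (a₀ ⊔ a₁) ⊓ (b₀ ⊔ b₁) ⊓ (a₀ ⊔ b₁) ⊓ (a₁ ⊔ b₀))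

/-- The identity (L₂). -/
def IdL2 (L : Type*) [Lattice L] : Prop :=
  ∀ a b b' c c' : L,
    a ⊓ ((b ⊓ (c ⊔ c')) ⊔ b') =
      (a ⊓ b ⊓ (c ⊔ c')) ⊔ (a ⊓ ((b ⊓ c) ⊔ b')) ⊔ (a ⊓ ((b ⊓ c') ⊔ b'))

variable {L : Type*} [Lattice L]

/-- The lattice polynomial `U_{i,n}` (in the variables `x₀, …, xₙ, x'₁, …, x'ₙ`). -/
def Upoly (x x' : ℕ → L) (n : ℕ) (i : ℕ) : L :=
  if h : n ≤ i then x n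
  else x i ⊓ (Upoly x x' n (i + 1) ⊔ x' (i + 1))
  termination_by n - i
  decreasing_by omega

/-- The lattice polynomial `V_{i,j,n}`. -/
def Vpoly (x x' : ℕ → L) (n i : ℕ) (j : ℕ) : L :=
  if h : i ≤ j then (x i ⊓ Upoly x x' n (i + 1)) ⊔ (x i ⊓ x' (i + 1))
  else x j ⊓ (Vpoly x x' n i (j + 1) ⊔ x' (j + 1))
  termination_by i - j
  decreasing_by omega

/-- The lattice polynomial `W_{i,j,n}`. -/
def Wpoly (x x' : ℕ → L) (n i : ℕ) (j : ℕ) : L :=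
  if h : i ≤ j then
    x i ⊓ (x' (i + 1) ⊔ x' (i + 2)) ⊓ ((Upoly x x' n (i + 1) ⊓ (x i ⊔ x' (i + 2))) ⊔ x' (i + 1))
  else x j ⊓ (Wpoly x x' n i (j + 1) ⊔ x' (j + 1))
  termination_by i - j
  decreasing_by omega

/-- `bigJoin f k = f 0 ⊔ f 1 ⊔ ⋯ ⊔ f k`. -/
def bigJoin (f : ℕ → L) : ℕ → L
  | 0 => f 0
  | k + 1 => bigJoin f k ⊔ f (k + 1)

end Identities

/-- The identity (Hₙ) : `Uₙ = ⋁_{0 ≤ i ≤ n-1} V_{i,n} ∨ ⋁_{0 ≤ i ≤ n-2} W_{i,n}`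
(intended for `n ≥ 1`). -/
def IdH (n : ℕ) (L : Type*) [Lattice L] : Prop :=
  ∀ x x' : ℕ → L,
    Upoly x x' n 0 =
      bigJoin (fun i =>
        if i + 2 ≤ n then Vpoly x x' n i 0 ⊔ Wpoly x x' n i 0 else Vpoly x x' n i 0) (n - 1)

/-- The identity (H_{m,n}) (intended for `m, n ≥ 1`); the common base point is
`x 0 = y 0 = t`. -/
def IdHmn (m n : ℕ) (L : Type*) [Lattice L] : Prop :=
  ∀ x x' y y' : ℕ → L, x 0 = y 0 →
    Upoly x x' m 0 ⊓ Upoly y y' n 0 =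
      bigJoin (fun i =>
          if i + 2 ≤ m then
            (Vpoly x x' m i 0 ⊓ Upoly y y' n 0) ⊔ (Wpoly x x' m i 0 ⊓ Upoly y y' n 0)
          else Vpoly x x' m i 0 ⊓ Upoly y y' n 0) (m - 1)
      ⊔ bigJoin (fun j =>
          if j + 2 ≤ n then
            (Upoly x x' m 0 ⊓ Vpoly y y' n j 0) ⊔ (Upoly x x' m 0 ⊓ Wpoly y y' n j 0)
          else Upoly x x' m 0 ⊓ Vpoly y y' n j 0) (n - 1)
      ⊔ (Upoly x x' m 0 ⊓ Upoly y y' n 0 ⊓ (x 1 ⊔ y' 1) ⊓ (x' 1 ⊔ y 1))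

/-- `p` is join-irreducible: `p = x ⊔ y` implies `p = x` or `p = y`. -/
def JIrr {L : Type*} [Lattice L] (p : L) : Prop :=
  ∀ x y : L, p = x ⊔ y → p = x ∨ p = y

/-- The join-dependency relation `p D q`. -/
def DRel {L : Type*} [Lattice L] (p q : L) : Prop :=
  p ≠ q ∧ ∃ x : L, p ≤ q ⊔ x ∧ ∀ y < q, ¬ p ≤ y ⊔ x

/-- A subset `S` of a lattice `L` is a join-seed. -/
def JoinSeed (L : Type*) [Lattice L] (S : Set L) : Prop :=
  (∀ p ∈ S, JIrr p) ∧
  (∀ a : L, ∃ T ⊆ S, IsLUB T a) ∧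
  (∀ p ∈ S, ∀ a b : L, p ≤ a ⊔ b → ¬ p ≤ a → ¬ p ≤ b →
    ∃ x ∈ S, ∃ y ∈ S, x ≤ a ∧ y ≤ b ∧ p ≤ x ⊔ y ∧
      (∀ x' < x, ¬ p ≤ x' ⊔ y) ∧ (∀ y' < y, ¬ p ≤ x ⊔ y'))

/-- The poset `P_{I,J} = I ∪ {p} ∪ J`, where every element of `I` is below `p`,
`p` is below every element of `J`, every element of `I` is below every element
of `J`, and there are no other strict comparabilities. -/
def PIJ (I J : Type*) : Type _ := I ⊕ (Unit ⊕ J)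

namespace PIJ

variable {I J : Type*}

/-- The rank (height) of an element of `P_{I,J}`. -/
def rank (a : PIJ I J) : ℕ :=
  Sum.elim (fun _ => 0) (Sum.elim (fun _ => 1) fun _ => 2) a

instance : PartialOrder (PIJ I J) where
  le a b := a = b ∨ rank a < rank b
  le_refl a := Or.inl rfl
  le_trans a b c hab hbc := by
    rcases hab with rfl | h
    · exact hbc
    · rcases hbc with rfl | h'
      · exact Or.inr h
      · exact Or.inr (h.trans h')
  le_antisymm a b hab hba := by
    rcases hab with rfl | h
    · rfl
    · rcases hba with rfl | h'
      · rfl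
      · omega

end PIJ

/-- A poset is tree-like if it has no infinite bounded chain and between any two
points there is at most one repetition-free finite path with respect to the
covering relation. -/
def TreeLike (P : Type*) [PartialOrder P] : Prop :=
  (∀ C : Set P, IsChain (· ≤ ·) C → BddAbove C → BddBelow C → C.Finite) ∧
  (∀ a b : P, ∀ l₁ l₂ : List P,
    l₁.Nodup → l₁.head? = some a → l₁.getLast? = some b →
      l₁.Chain' (fun u v => u ⋖ v ∨ v ⋖ u) →
    l₂.Nodup → l₂.head? = some a → l₂.getLast? = some b →
      l₂.Chain' (fun u v => u ⋖ v ∨ v ⋖ u) →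
    l₁ = l₂)

/-- A subset `U` of a poset `P` is `D`-closed. -/
def DClosed {P : Type*} [PartialOrder P] (U : Set P) : Prop :=
  ∀ x p y : P, x < p → p < y → (x ∈ U ∨ y ∈ U) → p ∈ U

/-- A complete congruence of a complete lattice. -/
structure IsCompleteCongr {L : Type*} [CompleteLattice L] (θ : L → L → Prop) : Prop where
  refl : ∀ x, θ x x
  symm : ∀ {x y}, θ x y → θ y x
  trans : ∀ {x y z}, θ x y → θ y z → θ x z
  sup : ∀ {a b c d}, θ a b → θ c d → θ (a ⊔ c) (b ⊔ d)
  inf : ∀ {a b c d}, θ a b → θ c d → θ (a ⊓ c) (b ⊓ d)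
  cSup : ∀ (x : L) (Y : Set L), Y.Nonempty → (∀ y ∈ Y, θ x y) → θ x (sSup Y)
  cInf : ∀ (x : L) (Y : Set L), Y.Nonempty → (∀ y ∈ Y, θ x y) → θ x (sInf Y)

/-- The map `h_U : Co(P) → Co(P ∖ U)`, `X ↦ X ∖ U`. -/
def coRestrict {P : Type*} [PartialOrder P] (U : Set P) (X : Co P) :
    Co {p : P // p ∉ U} :=
  ⟨Subtype.val ⁻¹' X.1, by
    constructor
    rintro a ha b hb z hz
    exact X.2.out ha hb ⟨hz.1, hz.2⟩⟩

/-- The lattice `D(P)` of all `D`-closed subsets of a poset `P`. -/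
def DSub (P : Type*) [PartialOrder P] : Type _ := {U : Set P // DClosed U}

namespace DSub

variable {P : Type*} [PartialOrder P]

instance : PartialOrder (DSub P) := Subtype.partialOrder _

instance : InfSet (DSub P) :=
  ⟨fun S => ⟨⋂ U ∈ S, U.1, by
    intro x p y h1 h2 h3
    simp only [Set.mem_iInter] at h3 ⊢
    intro U hU
    exact U.2 x p y h1 h2 (h3.imp (fun h => h U hU) fun h => h U hU)⟩⟩

noncomputable instance : CompleteLattice (DSub P) :=
  completeLatticeOfInf (DSub P) (by
    intro S
    constructor
    · intro t ht
      exact Set.biInter_subset_of_mem (t := fun U => U.1) ht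
    · intro b hb
      exact Set.subset_iInter₂ fun t ht => hb ht)

end DSub

/-! The poset consists of a fence `mid 0 > mid 1 < mid 2 > mid 3 < ⋯`, a top `top i` above
`mid (2i-1), mid (2i), mid (2i+1)` and a bottom `bot j` below `mid (2j), mid (2j+1), mid (2j+2)`.
Take `A = {mid k}`, `B = {mid 0} ∪ {top i}` (an up-set) and `C = {bot j}` (a down-set).
Starting from `A ⊓ B = {mid 0}`, alternately joining with `C` and `B` and meeting with `A`
extends the segment `{mid 0, …, mid n}` of the fence by one point each time: `mid (2j+1)` enters
between `bot j` and `mid (2j)`, and `mid (2i+2)` between `mid (2i+1)` and `top (i+1)`. Nothing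
else of the fence enters: joining a down-set (up-set) adds only points below (above) old points,
and only neighbours on the fence are comparable. So the generated sublattice contains infinitely
many distinct segments. -/

theorem lengthLE.mono {P : Type*} [PartialOrder P] {m n : ℕ} (h : lengthLE P m) (hmn : m ≤ n) :
    lengthLE P n :=
  fun C hC => (h C hC).trans (by omega)

theorem lengthLE_of_strictMono {P : Type*} [PartialOrder P] {n : ℕ} (f : P → ℕ)
    (hf : StrictMono f) (hle : ∀ a, f a ≤ n) : lengthLE P n := by
  intro C hC
  have hinj : InjOn f C := fun a ha b hb hab => by
    by_contra hne
    rcases hC ha hb hne with h | h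
    · exact (hf (h.lt_of_ne hne)).ne hab
    · exact (hf (h.lt_of_ne (Ne.symm hne))).ne' hab
  simpa using Finset.card_le_card_of_injOn f (t := Finset.range (n + 1))
    (fun a _ => Finset.mem_range.mpr (Nat.lt_succ_of_le (hle a))) hinj

theorem not_lengthLE_of_strictMono {P : Type*} [PartialOrder P] {n : ℕ} (e : Fin (n + 2) → P)
    (he : StrictMono e) : ¬ lengthLE P n := by
  classical
  intro h
  have hchain : IsChain (· ≤ ·) ((Finset.univ.image e : Finset P) : Set P) := by
    simpa using he.monotone.isChain_range
  have := h _ hchain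
  rw [Finset.card_image_of_injective _ he.injective, Finset.card_univ, Fintype.card_fin] at this
  omega

namespace Co

variable {P : Type*} [PartialOrder P]

theorem coe_inf (X Y : Co P) : (X ⊓ Y).1 = X.1 ∩ Y.1 := by
  apply Subset.antisymm
  · exact subset_inter (show X ⊓ Y ≤ X from inf_le_left) (show X ⊓ Y ≤ Y from inf_le_right)
  · exact show mk' _ (X.2.inter Y.2) ≤ X ⊓ Y from
      le_inf (show _ ⊆ X.1 from inter_subset_left) (show _ ⊆ Y.1 from inter_subset_right)

theorem mem_sup_iff {X Y : Co P} {z : P} :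
    z ∈ (X ⊔ Y).1 ↔ ∃ a ∈ X.1 ∪ Y.1, ∃ b ∈ X.1 ∪ Y.1, a ≤ z ∧ z ≤ b := by
  constructor
  · intro hz
    let H : Set P := {z | ∃ a ∈ X.1 ∪ Y.1, ∃ b ∈ X.1 ∪ Y.1, a ≤ z ∧ z ≤ b}
    have hH : H.OrdConnected :=
      ⟨fun _ ⟨a, ha, _, _, haz, _⟩ _ ⟨_, _, b, hb, _, hzb⟩ _ hz =>
        ⟨a, ha, b, hb, haz.trans hz.1, hz.2.trans hzb⟩⟩
    have hself : ∀ x ∈ X.1 ∪ Y.1, x ∈ H := fun x hx => ⟨x, hx, x, hx, le_rfl, le_rfl⟩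
    exact (show X ⊔ Y ≤ mk' H hH from
      sup_le (fun x hx => hself x (Or.inl hx)) (fun y hy => hself y (Or.inr hy))) hz
  · rintro ⟨a, ha, b, hb, haz, hzb⟩
    have hsup : X.1 ∪ Y.1 ⊆ (X ⊔ Y).1 :=
      union_subset (show X ≤ X ⊔ Y from le_sup_left) (show Y ≤ X ⊔ Y from le_sup_right)
    exact (X ⊔ Y).2.out (hsup ha) (hsup hb) ⟨haz, hzb⟩

theorem exists_ge_of_mem_sup {X Y : Co P} {z : P} (hz : z ∈ (X ⊔ Y).1) (hY : IsLowerSet Y.1)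
    (hzY : z ∉ Y.1) : ∃ b ∈ X.1, z ≤ b := by
  obtain ⟨-, -, b, hb | hb, -, hzb⟩ := mem_sup_iff.mp hz
  · exact ⟨b, hb, hzb⟩
  · exact absurd (hY hzb hb) hzY

theorem exists_le_of_mem_sup {X Y : Co P} {z : P} (hz : z ∈ (X ⊔ Y).1) (hY : IsUpperSet Y.1)
    (hzY : z ∉ Y.1) : ∃ a ∈ X.1, a ≤ z := by
  obtain ⟨a, ha | ha, -, -, haz, -⟩ := mem_sup_iff.mp hz
  · exact ⟨a, ha, haz⟩
  · exact absurd (hY haz ha) hzY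

end Co

inductive Zigzag : Type where
  | bot : ℕ → Zigzag
  | mid : ℕ → Zigzag
  | top : ℕ → Zigzag

namespace Zigzag

def level : Zigzag → ℕ
  | bot _ => 0
  | mid k => 2 - k % 2
  | top _ => 3

def pos : Zigzag → ℕ
  | bot j => 2 * j + 1
  | mid k => k
  | top i => 2 * i

/- Positions are odd on levels 0, 1 and even on levels 2, 3, so in a chain `a < b < c` one of the
two steps keeps the position; this makes the relation transitive. -/
instance : PartialOrder Zigzag where
  le a b := a = b ∨ level a < level b ∧ pos a ≤ pos b + 1 ∧ pos b ≤ pos a + 1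
  le_refl _ := Or.inl rfl
  le_trans a b c := by
    rintro (rfl | hab) (rfl | hbc)
    · exact Or.inl rfl
    · exact Or.inr hbc
    · exact Or.inr hab
    · right
      cases a <;> cases b <;> cases c <;> simp only [level, pos] at hab hbc ⊢ <;> omega
  le_antisymm a b := by
    rintro (rfl | hab) (h | hba)
    · rfl
    · rfl
    · exact h.symm
    · omega

theorem le_def {a b : Zigzag} :
    a ≤ b ↔ a = b ∨ level a < level b ∧ pos a ≤ pos b + 1 ∧ pos b ≤ pos a + 1 :=
  Iff.rfl

theorem level_strictMono : StrictMono level := by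
  rintro a b ⟨(rfl | ⟨h, -⟩), hba⟩
  · exact absurd (Or.inl rfl) hba
  · exact h

theorem pos_le_pos_add_one {a b : Zigzag} (h : a ≤ b) :
    pos a ≤ pos b + 1 ∧ pos b ≤ pos a + 1 := by
  rcases h with rfl | ⟨-, h⟩
  · omega
  · exact h

theorem lengthLE_three : lengthLE Zigzag 3 :=
  lengthLE_of_strictMono level level_strictMono fun a => by cases a <;> simp only [level] <;> omega

theorem not_lengthLE_two : ¬ lengthLE Zigzag 2 := by
  refine not_lengthLE_of_strictMono ![bot 0, mid 1, mid 0, top 0]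
    (Fin.strictMono_iff_lt_succ.mpr fun i => ?_)
  fin_cases i <;> simp [lt_iff_le_and_ne, le_def, level, pos]

def A : Co Zigzag := Co.mk' (range mid) ⟨by
  rintro _ ⟨k, rfl⟩ _ ⟨m, rfl⟩ (z | z | z) ⟨hkz, hzm⟩
  · exact absurd (level_strictMono.monotone hkz) (by simp only [level]; omega)
  · exact ⟨z, rfl⟩
  · exact absurd (level_strictMono.monotone hzm) (by simp only [level]; omega)⟩

theorem isUpperSet_insert_mid_zero_range_top : IsUpperSet (insert (mid 0) (range top)) := by
  rintro a (b | b | b) hab (rfl | ⟨i, rfl⟩) <;>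
    simp only [le_def, level, pos, mem_insert_iff, mem_range, mid.injEq, top.injEq, reduceCtorEq,
      exists_eq, exists_const, false_or, or_false, or_true] at hab ⊢ <;> omega

theorem isLowerSet_range_bot : IsLowerSet (range bot) := by
  rintro a (b | b | b) hab ⟨j, rfl⟩ <;> simp_all [le_def, level, pos]

def B : Co Zigzag := Co.mk' _ isUpperSet_insert_mid_zero_range_top.ordConnected

def C : Co Zigzag := Co.mk' _ isLowerSet_range_bot.ordConnected

noncomputable def seg : ℕ → Co Zigzag
  | 0 => A ⊓ B
  | n + 1 => A ⊓ (seg n ⊔ if Even n then C else B)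

theorem mid_mem_sup_C_iff {X : Co Zigzag} {n : ℕ} (hX : X.1 = mid '' Iic n) (hn : Even n)
    (k : ℕ) : mid k ∈ (X ⊔ C).1 ↔ k ≤ n + 1 := by
  constructor
  · intro hk
    obtain ⟨_, hb, hkb⟩ := Co.exists_ge_of_mem_sup hk isLowerSet_range_bot (by simp [C, Co.mk'])
    rw [hX] at hb
    obtain ⟨m, hm, rfl⟩ := hb
    have := (pos_le_pos_add_one hkb).1
    simp only [pos, mem_Iic] at this hm
    omega
  · intro hk
    rcases hk.lt_or_eq with hk | rfl
    · exact (le_sup_left : X ≤ X ⊔ C) (hX ▸ mem_image_of_mem mid (mem_Iic.mpr (by omega)))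
    obtain ⟨j, rfl⟩ := hn
    refine Co.mem_sup_iff.mpr ⟨bot j, Or.inr ⟨j, rfl⟩, mid (j + j),
      Or.inl (hX ▸ mem_image_of_mem mid self_mem_Iic), ?_, ?_⟩ <;>
      simp only [le_def, level, pos] <;> omega

theorem mid_mem_sup_B_iff {X : Co Zigzag} {n : ℕ} (hX : X.1 = mid '' Iic n) (hn : Odd n)
    (k : ℕ) : mid k ∈ (X ⊔ B).1 ↔ k ≤ n + 1 := by
  constructor
  · intro hk
    rcases Nat.eq_zero_or_pos k with rfl | hk0
    · omega
    obtain ⟨_, ha, hak⟩ := Co.exists_le_of_mem_sup hk isUpperSet_insert_mid_zero_range_top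
      (by simp only [B, Co.mk', mem_insert_iff, mid.injEq, mem_range, reduceCtorEq, exists_const,
        or_false]; omega)
    rw [hX] at ha
    obtain ⟨m, hm, rfl⟩ := ha
    have := (pos_le_pos_add_one hak).2
    simp only [pos, mem_Iic] at this hm
    omega
  · intro hk
    rcases hk.lt_or_eq with hk | rfl
    · exact (le_sup_left : X ≤ X ⊔ B) (hX ▸ mem_image_of_mem mid (mem_Iic.mpr (by omega)))
    obtain ⟨i, rfl⟩ := hn
    refine Co.mem_sup_iff.mpr ⟨mid (2 * i + 1), Or.inl (hX ▸ mem_image_of_mem mid self_mem_Iic),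
      top (i + 1), Or.inr (mem_insert_of_mem _ ⟨i + 1, rfl⟩), ?_, ?_⟩ <;>
      simp only [le_def, level, pos] <;> omega

theorem coe_seg (n : ℕ) : (seg n).1 = mid '' Iic n := by
  induction n with
  | zero =>
    rw [seg, Co.coe_inf]
    ext p
    simp only [A, B, Co.mk', mem_inter_iff, mem_range, mem_insert_iff, mem_image, mem_Iic,
      Nat.le_zero]
    constructor
    · rintro ⟨⟨k, rfl⟩, h | ⟨i, h⟩⟩
      · exact ⟨k, by simpa using h, rfl⟩
      · exact absurd h (by simp)
    · rintro ⟨k, rfl, rfl⟩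
      exact ⟨⟨0, rfl⟩, Or.inl rfl⟩
  | succ n ih =>
    have hstep : ∀ k, mid k ∈ (seg n ⊔ if Even n then C else B).1 ↔ k ≤ n + 1 := by
      split_ifs with hn
      · exact mid_mem_sup_C_iff ih hn
      · exact mid_mem_sup_B_iff ih (Nat.not_even_iff_odd.mp hn)
    rw [seg, Co.coe_inf]
    ext p
    simp only [A, Co.mk', mem_inter_iff, mem_range, mem_image, mem_Iic]
    constructor
    · rintro ⟨⟨k, rfl⟩, hk⟩
      exact ⟨k, (hstep k).mp hk, rfl⟩
    · rintro ⟨k, hk, rfl⟩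
      exact ⟨⟨k, rfl⟩, (hstep k).mpr hk⟩

theorem seg_injective : Function.Injective seg := by
  refine Function.Injective.of_comp (f := Subtype.val) ?_
  rw [show Subtype.val ∘ seg = fun n => mid '' Iic n from funext coe_seg]
  exact (image_injective.mpr fun _ _ => mid.inj).comp Iic_injective

theorem infinite_latticeClosure {s : Set (Co Zigzag)} (hA : A ∈ s) (hB : B ∈ s) (hC : C ∈ s) :
    (latticeClosure s).Infinite := by
  have hclosed := isSublattice_latticeClosure (s := s)
  have hseg : ∀ n, seg n ∈ latticeClosure s := by
    intro n
    induction n with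
    | zero => exact hclosed.infClosed (subset_latticeClosure hA) (subset_latticeClosure hB)
    | succ n ih =>
      refine hclosed.infClosed (subset_latticeClosure hA) (hclosed.supClosed ih ?_)
      split_ifs
      exacts [subset_latticeClosure hC, subset_latticeClosure hB]
  exact infinite_of_injective_forall_mem seg_injective hseg

end Zigzag

namespace Sublattice

variable {α : Type*} [Lattice α]

def closure (s : Set α) : Sublattice α :=
  ⟨latticeClosure s, isSublattice_latticeClosure.supClosed,
    isSublattice_latticeClosure.infClosed⟩

theorem exists_latticeClosure_range_eq_univ {ι : Type*} (f : ι → α) :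
    ∃ g : ι → closure (range f), latticeClosure (range g) = univ := by
  refine ⟨fun i => ⟨f i, subset_latticeClosure (mem_range_self i)⟩, ?_⟩
  apply image_injective.mpr Subtype.val_injective
  rw [image_latticeClosure _ _ (fun _ _ => rfl) (fun _ _ => rfl), ← range_comp, image_univ,
    Subtype.range_coe]
  rfl

end Sublattice

theorem stmt5 :
    (∃ (P : Type) (_ : PartialOrder P), lengthLE P 3 ∧ ¬ lengthLE P 2 ∧
      ∃ A B C : Co P, (latticeClosure {A, B, C}).Infinite) ∧
    (∀ n : ℕ, 3 ≤ n →
      ∃ (L : Type) (_ : Lattice L), Infinite L ∧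
        (∃ g : Fin 3 → L, latticeClosure (Set.range g) = Set.univ) ∧
        ∃ (Q : Type) (_ : PartialOrder Q), lengthLE Q n ∧
          ∃ f : LatticeHom L (Co Q), Function.Injective f) := by
  refine ⟨⟨Zigzag, inferInstance, Zigzag.lengthLE_three, Zigzag.not_lengthLE_two, Zigzag.A,
    Zigzag.B, Zigzag.C, Zigzag.infinite_latticeClosure (by simp) (by simp) (by simp)⟩,
    fun n hn => ?_⟩
  let gens : Fin 3 → Co Zigzag := ![Zigzag.A, Zigzag.B, Zigzag.C]
  have hinf : (latticeClosure (range gens)).Infinite :=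
    Zigzag.infinite_latticeClosure ⟨0, rfl⟩ ⟨1, rfl⟩ ⟨2, rfl⟩
  exact ⟨Sublattice.closure (range gens), inferInstance, hinf.to_subtype,
    Sublattice.exists_latticeClosure_range_eq_univ gens, Zigzag, inferInstance,
    Zigzag.lengthLE_three.mono hn, Sublattice.subtype _, Sublattice.subtype_injective _⟩
end

section
/- For every poset P, the set Σ = {{p} : p ∈ P} of singletons is a join-seed of the lattice Co(P). -/
/-! Common definitions: lattices of order-convex subsets of a poset,
length of a poset, the identities (S), (U), (B), (L2), (H_n), (H_{m,n}),
join-irreducibility, the join-dependency relation, join-seeds,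
the posets P_{I,J}, tree-like posets, D-closed sets,
and complete lattice congruences. -/

open Set

/-
In `Co P` every singleton is an atom, hence join-irreducible, and every order-convex set is the
union of its singletons. The join `X ⊔ Y` is the order-convex hull of `X ∪ Y`, so a point `p` of
`X ⊔ Y` lying in neither `X` nor `Y` sits between some `x ∈ X` and `y ∈ Y` (both endpoints in the
same part would put `p` in that part by convexity). Then `{p} ≤ {x} ⊔ {y}`, and this is minimal
in both atoms: removing `{x}` leaves `{p} ≤ {y} ≤ Y`.
-/

lemma IsAtom.jIrr {L : Type*} [Lattice L] [OrderBot L] {a : L} (ha : IsAtom a) : JIrr a := by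
  intro x y h
  rcases ha.le_iff.mp (h ▸ le_sup_left : x ≤ a) with rfl | hx
  · rcases ha.le_iff.mp (h ▸ le_sup_right : y ≤ a) with rfl | hy
    · exact absurd (h.trans (bot_sup_eq ⊥)) ha.1
    · exact Or.inr hy.symm
  · exact Or.inl hx.symm

lemma IsAtom.not_le_sup_of_lt {L : Type*} [Lattice L] [OrderBot L] {p x x' y : L}
    (hx : IsAtom x) (hx' : x' < x) (hpy : ¬ p ≤ y) : ¬ p ≤ x' ⊔ y := by
  rwa [hx.lt_iff.mp hx', bot_sup_eq]

section

variable {P : Type*} [PartialOrder P]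

def ordConnectedHull (s : Set P) : Set P :=
  {z | ∃ u ∈ s, ∃ v ∈ s, u ≤ z ∧ z ≤ v}

lemma subset_ordConnectedHull (s : Set P) : s ⊆ ordConnectedHull s :=
  fun z hz => ⟨z, hz, z, hz, le_rfl, le_rfl⟩

lemma ordConnected_ordConnectedHull (s : Set P) : (ordConnectedHull s).OrdConnected :=
  ⟨fun _ ⟨u, hu, _, _, hua, _⟩ _ ⟨_, _, v, hv, _, hbv⟩ _ hz =>
    ⟨u, hu, v, hv, hua.trans hz.1, hz.2.trans hbv⟩⟩

namespace Co

lemma coe_sup (X Y : Co P) : (X ⊔ Y).1 = ordConnectedHull (X.1 ∪ Y.1) := by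
  apply Subset.antisymm
  · have : X ⊔ Y ≤ ⟨_, ordConnected_ordConnectedHull (X.1 ∪ Y.1)⟩ :=
      sup_le (subset_union_left.trans (subset_ordConnectedHull _))
        (subset_union_right.trans (subset_ordConnectedHull _))
    exact this
  · rintro z ⟨u, hu, v, hv, huz, hzv⟩
    have hXY : X.1 ∪ Y.1 ⊆ (X ⊔ Y).1 := union_subset (le_sup_left : X ≤ X ⊔ Y) (le_sup_right : Y ≤ X ⊔ Y)
    exact (X ⊔ Y).2.out (hXY hu) (hXY hv) ⟨huz, hzv⟩

lemma coe_bot : (⊥ : Co P).1 = ∅ :=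
  eq_empty_of_subset_empty (bot_le : ⊥ ≤ emp)

lemma sngl_le_iff {p : P} {X : Co P} : sngl p ≤ X ↔ p ∈ X.1 :=
  singleton_subset_iff

lemma isAtom_sngl (p : P) : IsAtom (sngl p) := by
  refine ⟨fun h => ?_, fun X hX => Subtype.ext ?_⟩
  · simpa [sngl, coe_bot] using congrArg (p ∈ ·.1) h
  · rcases subset_singleton_iff_eq.mp hX.le with h | h
    · rw [h, coe_bot]
    · exact absurd (Subtype.ext h) hX.ne

lemma isLUB_image_sngl (X : Co P) : IsLUB (sngl '' X.1) X :=
  ⟨by rintro _ ⟨p, hp, rfl⟩; exact sngl_le_iff.mpr hp,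
    fun _ hY p hp => sngl_le_iff.mp (hY ⟨p, hp, rfl⟩)⟩

lemma exists_sngl_le_sngl_sup_sngl {p : P} {X Y : Co P} (hp : p ∈ (X ⊔ Y).1)
    (hpX : p ∉ X.1) (hpY : p ∉ Y.1) :
    ∃ x ∈ X.1, ∃ y ∈ Y.1, sngl p ≤ sngl x ⊔ sngl y := by
  have between {x y : P} (h : x ≤ p ∧ p ≤ y ∨ y ≤ p ∧ p ≤ x) : sngl p ≤ sngl x ⊔ sngl y := by
    rw [sngl_le_iff, coe_sup]
    rcases h with h | h
    · exact ⟨x, .inl rfl, y, .inr rfl, h⟩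
    · exact ⟨y, .inr rfl, x, .inl rfl, h⟩
  rw [coe_sup] at hp
  obtain ⟨u, hu | hu, v, hv | hv, huv⟩ := hp
  · exact absurd (X.2.out hu hv huv) hpX
  · exact ⟨u, hu, v, hv, between (.inl huv)⟩
  · exact ⟨v, hv, u, hu, between (.inr huv)⟩
  · exact absurd (Y.2.out hu hv huv) hpY

end Co

end

theorem stmt10 (P : Type*) [PartialOrder P] :
    JoinSeed (Co P) (Set.range fun p : P => Co.sngl p) := by
  refine ⟨?_, fun X => ⟨_, image_subset_range _ _, Co.isLUB_image_sngl X⟩, ?_⟩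
  · rintro _ ⟨p, rfl⟩
    exact (Co.isAtom_sngl p).jIrr
  · rintro _ ⟨p, rfl⟩ X Y hpXY hpX hpY
    obtain ⟨x, hx, y, hy, hpxy⟩ := Co.exists_sngl_le_sngl_sup_sngl (Co.sngl_le_iff.mp hpXY)
      (mt Co.sngl_le_iff.mpr hpX) (mt Co.sngl_le_iff.mpr hpY)
    have hxX : Co.sngl x ≤ X := Co.sngl_le_iff.mpr hx
    have hyY : Co.sngl y ≤ Y := Co.sngl_le_iff.mpr hy
    refine ⟨_, ⟨x, rfl⟩, _, ⟨y, rfl⟩, hxX, hyY, hpxy, fun x' hx' => ?_, fun y' hy' => ?_⟩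
    · exact (Co.isAtom_sngl x).not_le_sup_of_lt hx' fun h => hpY (h.trans hyY)
    · rw [sup_comm]
      exact (Co.isAtom_sngl y).not_le_sup_of_lt hy' fun h => hpX (h.trans hxX)
end

section
/- If L is a dually 2-distributive, complete, lower continuous, finitely spatial lattice, then the set J(L) of all join-irreducible elements of L is a join-seed of L. -/
/-! Common definitions: lattices of order-convex subsets of a poset,
length of a poset, the identities (S), (U), (B), (L2), (H_n), (H_{m,n}),
join-irreducibility, the join-dependency relation, join-seeds,
the posets P_{I,J}, tree-like posets, D-closed sets,
and complete lattice congruences. -/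

open Set

/-!
Lower continuity makes the set of `x ≤ a` with `p ≤ x ⊔ b` closed under infima of chains, so Zorn's
lemma yields a minimal such `x`; minimising first `x` against `b` and then `y ≤ b` against `x` gives
a pair that is minimal in both coordinates. Such an `x` is join-irreducible: if `x = u ⊔ v` with
`u, v < x`, dual 2-distributivity splits `p = p ⊓ (u ⊔ v ⊔ y)` into the join of `p ⊓ (u ⊔ v)`,
`p ⊓ (u ⊔ y)` and `p ⊓ (v ⊔ y)`, and as `p` is join-irreducible it lies below one of them,
contradicting `p ≰ x` or the minimality of `x`.
-/

theorem JIrr.eq_or_eq_or_eq {L : Type*} [Lattice L] {p a b c : L} (hp : JIrr p)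
    (h : p = a ⊔ b ⊔ c) : p = a ∨ p = b ∨ p = c := by
  rcases hp _ _ h with h | h
  · exact (hp _ _ h).imp_right Or.inl
  · exact Or.inr (Or.inr h)

theorem JIrr.of_minimal_le_sup {L : Type*} [Lattice L] {p x y : L}
    (h2 : ∀ u v w : L, p ⊓ (u ⊔ v ⊔ w) = (p ⊓ (u ⊔ v)) ⊔ (p ⊓ (u ⊔ w)) ⊔ (p ⊓ (v ⊔ w)))
    (hp : JIrr p) (hpx : ¬ p ≤ x) (hpxy : p ≤ x ⊔ y) (hmin : ∀ x' < x, ¬ p ≤ x' ⊔ y) :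
    JIrr x := by
  intro u v huv
  by_contra! hne
  have hu : u < x := lt_of_le_of_ne (huv ▸ le_sup_left) hne.1.symm
  have hv : v < x := lt_of_le_of_ne (huv ▸ le_sup_right) hne.2.symm
  have hsplit : p = (p ⊓ (u ⊔ v)) ⊔ (p ⊓ (u ⊔ y)) ⊔ (p ⊓ (v ⊔ y)) := by
    rw [← h2, inf_eq_left.mpr (huv ▸ hpxy)]
  rcases hp.eq_or_eq_or_eq hsplit with h | h | h
  · exact hpx (huv ▸ inf_eq_left.mp h.symm)
  · exact hmin u hu (inf_eq_left.mp h.symm)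
  · exact hmin v hv (inf_eq_left.mp h.symm)

theorem exists_le_minimal_le_sup {L : Type*} [CompleteLattice L] {p a b : L}
    (hb : ∀ D : Set L, D.Nonempty → DirectedOn (· ≥ ·) D → b ⊔ sInf D = ⨅ d ∈ D, b ⊔ d)
    (h : p ≤ a ⊔ b) : ∃ x ≤ a, p ≤ x ⊔ b ∧ ∀ x' < x, ¬ p ≤ x' ⊔ b := by
  set s : Set L := {x | x ≤ a ∧ p ≤ x ⊔ b}
  have hchain : ∀ c ⊆ s, IsChain (· ≥ ·) c → ∀ y ∈ c, ∃ lb ∈ s, ∀ z ∈ c, lb ≤ z := by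
    intro c hcs hc y hy
    refine ⟨sInf c, ⟨(sInf_le hy).trans (hcs hy).1, ?_⟩, fun z hz => sInf_le hz⟩
    calc p ≤ ⨅ d ∈ c, b ⊔ d := le_iInf₂ fun d hd => (hcs hd).2.trans_eq (sup_comm _ _)
      _ = b ⊔ sInf c := (hb c ⟨y, hy⟩ hc.directedOn).symm
      _ = sInf c ⊔ b := sup_comm _ _
  obtain ⟨x, hxa, hx⟩ := zorn_le_nonempty₀ (α := Lᵒᵈ) s hchain a ⟨le_rfl, h⟩
  exact ⟨x, hxa, hx.prop.2, fun x' hx' hp => hx'.not_ge (hx.2 ⟨hx'.le.trans hx.prop.1, hp⟩ hx'.le)⟩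

theorem exists_minimal_le_sup_pair {L : Type*} [CompleteLattice L]
    (hlc : ∀ (c : L) (D : Set L), D.Nonempty → DirectedOn (· ≥ ·) D →
      c ⊔ sInf D = ⨅ d ∈ D, c ⊔ d)
    {p a b : L} (h : p ≤ a ⊔ b) :
    ∃ x ≤ a, ∃ y ≤ b, p ≤ x ⊔ y ∧ (∀ x' < x, ¬ p ≤ x' ⊔ y) ∧ ∀ y' < y, ¬ p ≤ x ⊔ y' := by
  obtain ⟨x, hxa, hpxb, hxmin⟩ := exists_le_minimal_le_sup (hlc b) h
  obtain ⟨y, hyb, hpyx, hymin⟩ :=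
    exists_le_minimal_le_sup (hlc x) (hpxb.trans_eq (sup_comm x b))
  exact ⟨x, hxa, y, hyb, hpyx.trans_eq (sup_comm y x),
    fun x' hx' hp => hxmin x' hx' (hp.trans (sup_le_sup_left hyb x')),
    fun y' hy' hp => hymin y' hy' (hp.trans_eq (sup_comm x y'))⟩

theorem stmt11 (L : Type*) [CompleteLattice L]
    (h2 : ∀ a x y z : L,
      a ⊓ (x ⊔ y ⊔ z) = (a ⊓ (x ⊔ y)) ⊔ (a ⊓ (x ⊔ z)) ⊔ (a ⊓ (y ⊔ z)))
    (hlc : ∀ (a : L) (D : Set L), D.Nonempty → DirectedOn (· ≥ ·) D →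
      a ⊔ sInf D = ⨅ d ∈ D, a ⊔ d)
    (hfs : ∀ a : L, a = sSup {p : L | JIrr p ∧ p ≤ a}) :
    JoinSeed L {p : L | JIrr p} := by
  refine ⟨fun p hp => hp, fun a => ⟨{p | JIrr p ∧ p ≤ a}, fun q hq => hq.1, ?_⟩, ?_⟩
  · simpa only [← hfs a] using isLUB_sSup {p : L | JIrr p ∧ p ≤ a}
  intro p hp a b hpab hpa hpb
  obtain ⟨x, hxa, y, hyb, hpxy, hxmin, hymin⟩ := exists_minimal_le_sup_pair hlc hpab
  refine ⟨x, ?_, y, ?_, hxa, hyb, hpxy, hxmin, hymin⟩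
  · exact JIrr.of_minimal_le_sup (h2 p) hp (fun h => hpa (h.trans hxa)) hpxy hxmin
  · exact JIrr.of_minimal_le_sup (h2 p) hp (fun h => hpb (h.trans hyb))
      (hpxy.trans_eq (sup_comm x y)) fun y' hy' h => hymin y' hy' (h.trans_eq (sup_comm y' x))
end

section
/- For every poset P, the lattice Co(P) satisfies the identity (L2) if and only if lh(P) ≤ 2. -/
/-! Common definitions: lattices of order-convex subsets of a poset,
length of a poset, the identities (S), (U), (B), (L2), (H_n), (H_{m,n}),
join-irreducibility, the join-dependency relation, join-seeds,
the posets P_{I,J}, tree-like posets, D-closed sets,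
and complete lattice congruences. -/

open Set

/-! The join of two order-convex sets consists of the points lying between two of their points.
If `P` has no four-element chain, a point strictly between an element `u` of `b ⊓ (c ⊔ c')` and
an element of `b'` forces `u` itself into `c` or `c'`, so that point already lies in
`(b ⊓ c) ⊔ b'` or `(b ⊓ c') ⊔ b'`; this gives (L2). Conversely, for a chain `p₀ < p₁ < p₂ < p₃`,
take `a = [p₀, p₁]`, `b = {p₂}`, `b' = c = {p₀}` and `c' = {p₃}`: the left side of (L2) contains
`p₁`, while every joinand of the right side lies in `{p₀}`. -/

section LatticeIdentity

variable {L : Type*} [Lattice L]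

theorem idL2_iff_le :
    IdL2 L ↔ ∀ a b b' c c' : L, a ⊓ ((b ⊓ (c ⊔ c')) ⊔ b') ≤
      (a ⊓ b ⊓ (c ⊔ c')) ⊔ (a ⊓ ((b ⊓ c) ⊔ b')) ⊔ (a ⊓ ((b ⊓ c') ⊔ b')) := by
  refine ⟨fun h a b b' c c' => (h a b b' c c').le, fun h a b b' c c' => (h a b b' c c').antisymm ?_⟩
  refine sup_le (sup_le ?_ ?_) ?_
  · exact le_inf (inf_le_left.trans inf_le_left)
      ((le_inf (inf_le_left.trans inf_le_right) inf_le_right).trans le_sup_left)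
  · exact inf_le_inf_left a (sup_le_sup_right (inf_le_inf_left b le_sup_left) b')
  · exact inf_le_inf_left a (sup_le_sup_right (inf_le_inf_left b le_sup_right) b')

theorem IdL2.inf_sup_le (h : IdL2 L) {a b b' c c' : L} (hab : a ⊓ b ≤ b') (hbc : b ⊓ c ≤ b')
    (hbc' : b ⊓ c' ≤ b') : a ⊓ ((b ⊓ (c ⊔ c')) ⊔ b') ≤ b' := by
  rw [h]
  exact sup_le (sup_le (inf_le_left.trans hab) (inf_le_right.trans (sup_le hbc le_rfl)))
    (inf_le_right.trans (sup_le hbc' le_rfl))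

end LatticeIdentity

section Length

variable {P : Type*} [PartialOrder P]

theorem IsChain.exists_strictMono_fin {C : Finset P} (hC : IsChain (· ≤ ·) (C : Set P)) :
    ∃ f : Fin C.card → P, StrictMono f ∧ ∀ i, f i ∈ C := by
  classical
  let _ := hC.linearOrder
  let e := Fintype.orderIsoFinOfCardEq (C : Set P) (k := C.card) (by simp)
  exact ⟨fun i => (e i).1, fun i j h => e.strictMono h, fun i => (e i).2⟩

theorem lengthLE_iff_forall_not_strictMono (n : ℕ) :
    lengthLE P n ↔ ∀ f : Fin (n + 2) → P, ¬StrictMono f := by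
  classical
  constructor
  · intro h f hf
    have hcard := h (Finset.univ.image f) (by
      rw [Finset.coe_image, Finset.coe_univ, Set.image_univ]
      exact hf.monotone.isChain_range)
    rw [Finset.card_image_of_injective _ hf.injective, Finset.card_univ, Fintype.card_fin] at hcard
    omega
  · intro h C hC
    by_contra! hlt
    obtain ⟨f, hf, -⟩ := hC.exists_strictMono_fin
    exact h (f ∘ Fin.castLE hlt) (hf.comp (Fin.castLEOrderEmb hlt).strictMono)

theorem lengthLE_two_iff :
    lengthLE P 2 ↔ ∀ w x y z : P, w < x → x < y → y < z → False := by
  rw [lengthLE_iff_forall_not_strictMono]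
  refine ⟨fun h w x y z hwx hxy hyz => h ![w, x, y, z] ?_, fun h f hf => h _ _ _ _
    (hf (show (0 : Fin 4) < 1 by decide)) (hf (show (1 : Fin 4) < 2 by decide))
    (hf (show (2 : Fin 4) < 3 by decide))⟩
  exact Fin.strictMono_iff_lt_succ.2 fun i => by fin_cases i <;> assumption

end Length

namespace Co

variable {P : Type*} [PartialOrder P]

theorem le_iff_subset {a b : Co P} : a ≤ b ↔ a.1 ⊆ b.1 := Iff.rfl

theorem mem_inf {a b : Co P} {z : P} : z ∈ (a ⊓ b).1 ↔ z ∈ a.1 ∧ z ∈ b.1 := by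
  have h : mk' _ (a.2.inter b.2) ≤ a ⊓ b := le_inf inter_subset_left inter_subset_right
  exact ⟨fun hz => ⟨le_iff_subset.1 inf_le_left hz, le_iff_subset.1 inf_le_right hz⟩, (h ·)⟩

theorem coe_sup_s13 (a b : Co P) :
    (a ⊔ b).1 = {z | ∃ x ∈ a.1 ∪ b.1, ∃ y ∈ a.1 ∪ b.1, x ≤ z ∧ z ≤ y} := by
  have hconv : ({z | ∃ x ∈ a.1 ∪ b.1, ∃ y ∈ a.1 ∪ b.1, x ≤ z ∧ z ≤ y} : Set P).OrdConnected :=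
    ⟨fun _ ⟨x, hx, _, _, hxu, _⟩ _ ⟨_, _, y, hy, _, hvy⟩ _ hw =>
      ⟨x, hx, y, hy, hxu.trans hw.1, hw.2.trans hvy⟩⟩
  have hle : a ⊔ b ≤ mk' _ hconv :=
    sup_le (fun z hz => ⟨z, Or.inl hz, z, Or.inl hz, le_rfl, le_rfl⟩)
      (fun z hz => ⟨z, Or.inr hz, z, Or.inr hz, le_rfl, le_rfl⟩)
  refine Subset.antisymm hle ?_
  rintro z ⟨x, hx, y, hy, hxz, hzy⟩
  have mem : ∀ w ∈ a.1 ∪ b.1, w ∈ (a ⊔ b).1 := fun w hw =>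
    hw.elim (fun h => le_iff_subset.1 le_sup_left h) (fun h => le_iff_subset.1 le_sup_right h)
  exact (a ⊔ b).2.out (mem x hx) (mem y hy) ⟨hxz, hzy⟩

theorem mem_sup_of_le_of_le {a b : Co P} {x y z : P} (hx : x ∈ a.1 ∪ b.1) (hy : y ∈ a.1 ∪ b.1)
    (hxz : x ≤ z) (hzy : z ≤ y) : z ∈ (a ⊔ b).1 :=
  (coe_sup_s13 a b).symm ▸ ⟨x, hx, y, hy, hxz, hzy⟩

theorem mem_union_of_mem_sup_of_lt_of_lt (hP : lengthLE P 2) {c c' : Co P} {u z v : P}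
    (hu : u ∈ (c ⊔ c').1) (huz : u < z) (hzv : z < v) : u ∈ c.1 ∪ c'.1 := by
  rw [coe_sup_s13] at hu
  obtain ⟨s, hs, -, -, hsu, -⟩ := hu
  rcases hsu.eq_or_lt with rfl | hsu
  · exact hs
  · exact (lengthLE_two_iff.1 hP _ _ _ _ hsu huz hzv).elim

theorem mem_union_of_mem_sup_of_lt_of_lt' (hP : lengthLE P 2) {c c' : Co P} {u z v : P}
    (hv : v ∈ (c ⊔ c').1) (huz : u < z) (hzv : z < v) : v ∈ c.1 ∪ c'.1 := by
  rw [coe_sup_s13] at hv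
  obtain ⟨-, -, t, ht, -, hvt⟩ := hv
  rcases hvt.eq_or_lt with rfl | hvt
  · exact ht
  · exact (lengthLE_two_iff.1 hP _ _ _ _ huz hzv hvt).elim

theorem coe_inf_sup_subset (hP : lengthLE P 2) (b b' c c' : Co P) :
    ((b ⊓ (c ⊔ c')) ⊔ b').1 ⊆
      (b ⊓ (c ⊔ c')).1 ∪ ((b ⊓ c) ⊔ b').1 ∪ ((b ⊓ c') ⊔ b').1 := by
  intro z hz
  rw [coe_sup_s13] at hz
  obtain ⟨u, hu, v, hv, huz, hzv⟩ := hz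
  have of_b' : z ∈ b'.1 → z ∈ ((b ⊓ c) ⊔ b').1 := fun h => le_iff_subset.1 le_sup_right h
  rcases hu with hu | hu <;> rcases hv with hv | hv
  · exact Or.inl (Or.inl ((b ⊓ (c ⊔ c')).2.out hu hv ⟨huz, hzv⟩))
  · rcases huz.eq_or_lt with rfl | huz
    · exact Or.inl (Or.inl hu)
    rcases hzv.eq_or_lt with rfl | hzv
    · exact Or.inl (Or.inr (of_b' hv))
    rw [mem_inf] at hu
    obtain hc | hc := mem_union_of_mem_sup_of_lt_of_lt hP hu.2 huz hzv
    · exact Or.inl (Or.inr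
        (mem_sup_of_le_of_le (Or.inl (mem_inf.2 ⟨hu.1, hc⟩)) (Or.inr hv) huz.le hzv.le))
    · exact Or.inr (mem_sup_of_le_of_le (Or.inl (mem_inf.2 ⟨hu.1, hc⟩)) (Or.inr hv) huz.le hzv.le)
  · rcases hzv.eq_or_lt with rfl | hzv
    · exact Or.inl (Or.inl hv)
    rcases huz.eq_or_lt with rfl | huz
    · exact Or.inl (Or.inr (of_b' hu))
    rw [mem_inf] at hv
    obtain hc | hc := mem_union_of_mem_sup_of_lt_of_lt' hP hv.2 huz hzv
    · exact Or.inl (Or.inr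
        (mem_sup_of_le_of_le (Or.inr hu) (Or.inl (mem_inf.2 ⟨hv.1, hc⟩)) huz.le hzv.le))
    · exact Or.inr (mem_sup_of_le_of_le (Or.inr hu) (Or.inl (mem_inf.2 ⟨hv.1, hc⟩)) huz.le hzv.le)
  · exact Or.inl (Or.inr (of_b' (b'.2.out hu hv ⟨huz, hzv⟩)))

theorem idL2_of_lengthLE_two (hP : lengthLE P 2) : IdL2 (Co P) := by
  refine idL2_iff_le.2 fun a b b' c c' z hz => ?_
  obtain ⟨hza, hz⟩ := mem_inf.1 hz
  obtain (hz | hz) | hz := coe_inf_sup_subset hP b b' c c' hz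
  · obtain ⟨hzb, hzc⟩ := mem_inf.1 hz
    exact le_iff_subset.1 (le_sup_left.trans le_sup_left) (mem_inf.2 ⟨mem_inf.2 ⟨hza, hzb⟩, hzc⟩)
  · exact le_iff_subset.1 (le_sup_right.trans le_sup_left) (mem_inf.2 ⟨hza, hz⟩)
  · exact le_iff_subset.1 le_sup_right (mem_inf.2 ⟨hza, hz⟩)

theorem not_idL2_of_lt_of_lt_of_lt {p₀ p₁ p₂ p₃ : P} (h₀₁ : p₀ < p₁) (h₁₂ : p₁ < p₂)
    (h₂₃ : p₂ < p₃) : ¬IdL2 (Co P) := by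
  intro hL2
  have hdisj : ∀ {a b : Co P} {x : P}, (∀ y ∈ a.1, y ∈ b.1 → False) → a ⊓ b ≤ sngl x :=
    fun h y hy => ((h y) ((mem_inf.1 hy).1) (mem_inf.1 hy).2).elim
  have hle := hL2.inf_sup_le (a := mk' (Icc p₀ p₁) ordConnected_Icc) (b := sngl p₂)
    (b' := sngl p₀) (c := sngl p₀) (c' := sngl p₃)
    (hdisj fun y hy (hy2 : y = p₂) => (hy2 ▸ h₁₂).not_ge hy.2) inf_le_right
    (hdisj fun y (hy2 : y = p₂) (hy3 : y = p₃) => h₂₃.ne (hy2 ▸ hy3))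
  have hp₂ : p₂ ∈ (sngl p₂ ⊓ (sngl p₀ ⊔ sngl p₃)).1 :=
    mem_inf.2 ⟨rfl, mem_sup_of_le_of_le (Or.inl rfl) (Or.inr rfl) (h₀₁.trans h₁₂).le h₂₃.le⟩
  have hp₁ : p₁ ∈ (mk' (Icc p₀ p₁) ordConnected_Icc ⊓
      ((sngl p₂ ⊓ (sngl p₀ ⊔ sngl p₃)) ⊔ sngl p₀)).1 :=
    mem_inf.2 ⟨⟨h₀₁.le, le_rfl⟩, mem_sup_of_le_of_le (Or.inr rfl) (Or.inl hp₂) h₀₁.le h₁₂.le⟩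
  exact h₀₁.ne' (le_iff_subset.1 hle hp₁)

end Co

theorem stmt13 (P : Type*) [PartialOrder P] : IdL2 (Co P) ↔ lengthLE P 2 :=
  ⟨fun hL2 => lengthLE_two_iff.2 fun _ _ _ _ h₀₁ h₁₂ h₂₃ =>
      Co.not_idL2_of_lt_of_lt_of_lt h₀₁ h₁₂ h₂₃ hL2,
    Co.idL2_of_lengthLE_two⟩
end
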